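/- arXiv:2509.08529 — 5 statements merged into one kernel-verified Lean document; each statement's English description precedes it below -/
import Mathlib

section
/- Let R be a commutative ring and λ ∈ R. The R-algebra maps on R[T, 1/(1+λT)] given by comultiplication T ↦ T⊗1 + 1⊗T + λ T⊗T, counit T ↦ 0, and antipode T ↦ −T/(1+λT) make R[T, 1/(1+λT)] a commutative Hopf algebra over R. (In particular the comultiplication is well defined, i.e. 1+λ(T⊗1+1⊗T+λT⊗T) = (1+λT)⊗(1+λT) is invertible, coassociativity holds, and the antipode axiom S*id = unit∘counit holds on T.) -/
open scoped TensorProduct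

noncomputable section

/-- The coordinate ring `R[T, 1/(1+λT)]` of `𝒢^{(λ)}_R`. -/
abbrev GA (R : Type*) [CommRing R] (lam : R) : Type _ :=
  Localization.Away (1 + Polynomial.C lam * Polynomial.X : Polynomial R)

/-- The image of `T` in `R[T, 1/(1+λT)]`. -/
def tT (R : Type*) [CommRing R] (lam : R) : GA R lam :=
  algebraMap (Polynomial R) (GA R lam) Polynomial.X

/-! Writing `x ∘ y = x + y + λxy` for the group law on `𝒢^{(λ)}`, one has
`1 + λ(x ∘ y) = (1 + λx)(1 + λy)`, so `x ↦ 1 + λx` is a homomorphism to `𝔾ₘ`.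
Algebra maps out of `R[T, 1/(1+λT)]` are given by the image `x` of `T`, subject only to
`1 + λx` being a unit. For `Δ` this is the identity above in the tensor square, for `ε` it is
trivial, and for `S` the choice `S(T) = -T/(1+λT)` gives `1 + λS(T) = (1+λT)⁻¹`. The Hopf
axioms on `T` are then polynomial identities. -/

open TensorProduct Polynomial

section TensorProduct
variable {R A B : Type*} [CommRing R] [CommRing A] [CommRing B] [Algebra R A] [Algebra R B]

theorem IsUnit.tmul {a : A} {b : B} (ha : IsUnit a) (hb : IsUnit b) : IsUnit (a ⊗ₜ[R] b) := by
  simpa only [Algebra.TensorProduct.includeLeft_apply, Algebra.TensorProduct.includeRight_apply,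
    Algebra.TensorProduct.tmul_mul_tmul, mul_one, one_mul] using
    (ha.map (Algebra.TensorProduct.includeLeft (S := R) (B := B))).mul
      (hb.map (Algebra.TensorProduct.includeRight (R := R) (A := A)))

theorem one_add_algebraMap_mul_tmul (lam : R) (a : A) (b : B) :
    (1 : A ⊗[R] B) + algebraMap R _ lam * (a ⊗ₜ 1 + 1 ⊗ₜ b + lam • (a ⊗ₜ b))
      = (1 + algebraMap R A lam * a) ⊗ₜ (1 + algebraMap R B lam * b) := by
  simp only [← Algebra.smul_def, Algebra.TensorProduct.one_def, add_tmul, tmul_add, smul_add,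
    tmul_smul, ← smul_tmul', smul_smul]
  abel

end TensorProduct

theorem one_add_mul_neg_mul_inverse {A : Type*} [CommRing A] {c x : A} (h : IsUnit (1 + c * x)) :
    1 + c * -(x * Ring.inverse (1 + c * x)) = Ring.inverse (1 + c * x) := by
  linear_combination -(Ring.mul_inverse_cancel _ h)

namespace GA
variable {R : Type*} [CommRing R] (lam : R)

theorem algebraMap_one_add_C_mul_X :
    algebraMap R[X] (GA R lam) (1 + C lam * X) = 1 + algebraMap R (GA R lam) lam * tT R lam := by
  rw [IsScalarTower.algebraMap_apply R R[X] (GA R lam), algebraMap_eq, map_add, map_mul, map_one,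
    tT]

theorem isUnit_one_add_mul_tT : IsUnit (1 + algebraMap R (GA R lam) lam * tT R lam) :=
  algebraMap_one_add_C_mul_X lam ▸ IsLocalization.Away.algebraMap_isUnit _

section lift
variable {B : Type*} [CommRing B] [Algebra R B]

def lift (x : B) (hx : IsUnit (1 + algebraMap R B lam * x)) : GA R lam →ₐ[R] B :=
  IsLocalization.Away.liftAlgHom (f := aeval x) (1 + C lam * X) <| by
    simpa [Algebra.smul_def] using hx

@[simp] theorem lift_tT (x : B) (hx : IsUnit (1 + algebraMap R B lam * x)) :
    lift lam x hx (tT R lam) = x := by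
  simp [lift, tT]

end lift

def comul : GA R lam →ₐ[R] GA R lam ⊗[R] GA R lam :=
  lift lam (tT R lam ⊗ₜ 1 + 1 ⊗ₜ tT R lam + lam • (tT R lam ⊗ₜ tT R lam)) <| by
    rw [one_add_algebraMap_mul_tmul]
    exact (isUnit_one_add_mul_tT lam).tmul (isUnit_one_add_mul_tT lam)

def counit : GA R lam →ₐ[R] R :=
  lift lam 0 (by simp)

def antipode : GA R lam →ₐ[R] GA R lam :=
  lift lam (-(tT R lam * Ring.inverse (1 + algebraMap R _ lam * tT R lam))) <| by
    rw [one_add_mul_neg_mul_inverse (isUnit_one_add_mul_tT lam)]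
    exact (isUnit_one_add_mul_tT lam).ringInverse

@[simp] theorem comul_tT :
    comul lam (tT R lam) = tT R lam ⊗ₜ 1 + 1 ⊗ₜ tT R lam + lam • (tT R lam ⊗ₜ tT R lam) :=
  lift_tT ..

@[simp] theorem counit_tT : counit lam (tT R lam) = 0 :=
  lift_tT ..

theorem one_add_mul_tT_mul_antipode_tT :
    (1 + algebraMap R (GA R lam) lam * tT R lam) * antipode lam (tT R lam) = -tT R lam := by
  rw [antipode, lift_tT]
  linear_combination (-tT R lam) * Ring.mul_inverse_cancel _ (isUnit_one_add_mul_tT lam)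

theorem assoc_map_comul_comul_tT :
    Algebra.TensorProduct.assoc R R R (GA R lam) (GA R lam) (GA R lam)
        (Algebra.TensorProduct.map (comul lam) (AlgHom.id R _) (comul lam (tT R lam)))
      = Algebra.TensorProduct.map (AlgHom.id R _) (comul lam) (comul lam (tT R lam)) := by
  simp only [comul_tT, map_add, map_one, map_smul, Algebra.TensorProduct.map_tmul, AlgHom.coe_id,
    id_eq, tmul_add, add_tmul, tmul_smul, ← smul_tmul', Algebra.TensorProduct.assoc_tmul,
    smul_add, smul_smul, Algebra.TensorProduct.one_def]
  abel

theorem lid_map_counit_comul_tT :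
    Algebra.TensorProduct.lid R (GA R lam)
        (Algebra.TensorProduct.map (counit lam) (AlgHom.id R _) (comul lam (tT R lam)))
      = tT R lam := by
  simp [smul_tmul']

theorem lmul'_map_antipode_comul_tT :
    Algebra.TensorProduct.lmul' R
        (Algebra.TensorProduct.map (antipode lam) (AlgHom.id R _) (comul lam (tT R lam)))
      = algebraMap R (GA R lam) (counit lam (tT R lam)) := by
  simp only [comul_tT, counit_tT, map_add, map_smul, map_zero, Algebra.TensorProduct.map_tmul,
    AlgHom.coe_id, id_eq, Algebra.TensorProduct.lmul'_apply_tmul, map_one]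
  rw [Algebra.smul_def]
  linear_combination one_add_mul_tT_mul_antipode_tT lam

end GA

/-- the maps `Δ(T)=T⊗1+1⊗T+λT⊗T`, `ε(T)=0`, `S(T)=-T/(1+λT)` are well
defined on `R[T, 1/(1+λT)]` and make it a commutative Hopf algebra over `R`
(coassociativity, counit axiom and antipode axiom hold on the generator `T`). -/
theorem stmt1 (R : Type*) [CommRing R] (lam : R) :
    ∃ (Δ : GA R lam →ₐ[R] GA R lam ⊗[R] GA R lam) (ε : GA R lam →ₐ[R] R)
      (S : GA R lam →ₐ[R] GA R lam),
      -- well-definedness of the comultiplication: the image of `1+λT` is a unit,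
      -- being `(1+λT)⊗(1+λT)`
      (1 : GA R lam ⊗[R] GA R lam) +
          algebraMap R _ lam * (tT R lam ⊗ₜ 1 + 1 ⊗ₜ tT R lam + lam • (tT R lam ⊗ₜ tT R lam))
        = (1 + algebraMap R _ lam * tT R lam) ⊗ₜ (1 + algebraMap R _ lam * tT R lam) ∧
      IsUnit ((1 + algebraMap R (GA R lam) lam * tT R lam) ⊗ₜ[R]
        (1 + algebraMap R (GA R lam) lam * tT R lam)) ∧
      -- values on the generator
      Δ (tT R lam) = tT R lam ⊗ₜ 1 + 1 ⊗ₜ tT R lam + lam • (tT R lam ⊗ₜ tT R lam) ∧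
      ε (tT R lam) = 0 ∧
      (1 + algebraMap R (GA R lam) lam * tT R lam) * S (tT R lam) = - tT R lam ∧
      -- coassociativity on T
      (Algebra.TensorProduct.assoc R R R (GA R lam) (GA R lam) (GA R lam))
          ((Algebra.TensorProduct.map Δ (AlgHom.id R _)) (Δ (tT R lam)))
        = (Algebra.TensorProduct.map (AlgHom.id R _) Δ) (Δ (tT R lam)) ∧
      -- counit axiom on T
      (Algebra.TensorProduct.lid R (GA R lam))
          ((Algebra.TensorProduct.map ε (AlgHom.id R _)) (Δ (tT R lam))) = tT R lam ∧
      -- antipode axiom `m ∘ (S ⊗ id) ∘ Δ = η ∘ ε` on T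
      (Algebra.TensorProduct.lmul' R)
          ((Algebra.TensorProduct.map S (AlgHom.id R _)) (Δ (tT R lam)))
        = algebraMap R (GA R lam) (ε (tT R lam)) :=
  ⟨GA.comul lam, GA.counit lam, GA.antipode lam, one_add_algebraMap_mul_tmul lam _ _,
    (GA.isUnit_one_add_mul_tT lam).tmul (GA.isUnit_one_add_mul_tT lam), GA.comul_tT lam,
    GA.counit_tT lam, GA.one_add_mul_tT_mul_antipode_tT lam, GA.assoc_map_comul_comul_tT lam,
    GA.lid_map_counit_comul_tT lam, GA.lmul'_map_antipode_comul_tT lam⟩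
end
end

section
/- Let R be a commutative ring and λ ∈ R. The R-algebra homomorphism α: R[U, 1/U] → R[T, 1/(1+λT)] defined by U ↦ 1 + λT is a homomorphism of Hopf algebras from the Hopf algebra of G_m (Δ(U)=U⊗U, ε(U)=1) to the Hopf algebra of 𝒢^{(λ)} (Δ(T)=T⊗1+1⊗T+λT⊗T, ε(T)=0). Moreover, if λ is invertible in R, then α is an isomorphism of Hopf algebras. -/
open scoped TensorProduct

noncomputable section

/-- The coordinate ring `R[U, 1/U]` of `G_m`. -/
abbrev GmA (R : Type*) [CommRing R] : Type _ :=
  Localization.Away (Polynomial.X : Polynomial R)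

/-- The image of `U` in `R[U, 1/U]`. -/
def uU (R : Type*) [CommRing R] : GmA R :=
  algebraMap (Polynomial R) (GmA R) Polynomial.X

section Helpers

variable {R : Type*} [CommRing R]

/-- Extensionality for `R`-algebra homs out of a localization of `R[X]`:
they are determined by the image of `X`. -/
theorem locAway_algHom_ext (p : Polynomial R) {S : Type*} [CommRing S] [Algebra R S]
    {φ ψ : Localization.Away p →ₐ[R] S}
    (h : φ (algebraMap (Polynomial R) (Localization.Away p) Polynomial.X)
       = ψ (algebraMap (Polynomial R) (Localization.Away p) Polynomial.X)) : φ = ψ := by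
  have key : φ.comp (IsScalarTower.toAlgHom R (Polynomial R) (Localization.Away p))
      = ψ.comp (IsScalarTower.toAlgHom R (Polynomial R) (Localization.Away p)) :=
    Polynomial.algHom_ext h
  have : (φ : Localization.Away p →+* S) = ψ := by
    apply IsLocalization.ringHom_ext (Submonoid.powers p)
    exact congrArg AlgHom.toRingHom key
  exact AlgHom.ext fun x => RingHom.congr_fun this x

theorem algMap_one_add (lam : R) :
    algebraMap (Polynomial R) (GA R lam) (1 + Polynomial.C lam * Polynomial.X)
      = 1 + algebraMap R (GA R lam) lam * tT R lam := by
  simp only [map_add, map_one, map_mul, tT, ← Polynomial.algebraMap_eq,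
    ← IsScalarTower.algebraMap_apply]

/-- The algebra map `α : R[U,1/U] → R[T,1/(1+λT)]`, `U ↦ 1+λT`. -/
def alphaHom (lam : R) : GmA R →ₐ[R] GA R lam :=
  IsLocalization.liftAlgHom (M := Submonoid.powers (Polynomial.X : Polynomial R))
    (f := Polynomial.aeval (1 + algebraMap R (GA R lam) lam * tT R lam))
    (by
      rintro ⟨-, n, rfl⟩
      simp only [map_pow]
      apply IsUnit.pow
      rw [Polynomial.aeval_X, ← algMap_one_add]
      exact IsLocalization.Away.algebraMap_isUnit _)

theorem alphaHom_uU (lam : R) :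
    alphaHom lam (uU R) = 1 + algebraMap R (GA R lam) lam * tT R lam := by
  rw [uU, alphaHom, IsLocalization.liftAlgHom_apply, IsLocalization.lift_eq]
  simp

theorem tensor_key {B : Type*} [CommRing B] [Algebra R B] (lam : R) (t : B) :
    (1 + algebraMap R B lam * t) ⊗ₜ[R] (1 + algebraMap R B lam * t)
      = 1 + algebraMap R (B ⊗[R] B) lam *
        (t ⊗ₜ 1 + 1 ⊗ₜ t + lam • (t ⊗ₜ t)) := by
  simp only [← Algebra.smul_def, smul_add, TensorProduct.tmul_add, TensorProduct.add_tmul,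
    ← TensorProduct.smul_tmul', TensorProduct.tmul_smul, smul_smul,
    Algebra.TensorProduct.one_def]
  abel

end Helpers

/-- the algebra map `α : R[U,1/U] → R[T,1/(1+λT)]`, `U ↦ 1+λT`, is a
homomorphism of Hopf algebras (for the pinned-down comultiplications and counits),
and is an isomorphism if `λ` is invertible. -/
theorem stmt2 (R : Type*) [CommRing R] (lam : R) :
    ∃ α : GmA R →ₐ[R] GA R lam,
      α (uU R) = 1 + algebraMap R (GA R lam) lam * tT R lam ∧
      (∀ (Δm : GmA R →ₐ[R] GmA R ⊗[R] GmA R)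
         (Δg : GA R lam →ₐ[R] GA R lam ⊗[R] GA R lam),
        Δm (uU R) = uU R ⊗ₜ uU R →
        Δg (tT R lam) = tT R lam ⊗ₜ 1 + 1 ⊗ₜ tT R lam + lam • (tT R lam ⊗ₜ tT R lam) →
        (Algebra.TensorProduct.map α α).comp Δm = Δg.comp α) ∧
      (∀ (εm : GmA R →ₐ[R] R) (εg : GA R lam →ₐ[R] R),
        εm (uU R) = 1 → εg (tT R lam) = 0 → εg.comp α = εm) ∧
      (IsUnit lam → Function.Bijective α) := by
  refine ⟨alphaHom lam, alphaHom_uU lam, ?_, ?_, ?_⟩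
  · intro Δm Δg hm hg
    apply locAway_algHom_ext (Polynomial.X : Polynomial R)
    show (Algebra.TensorProduct.map _ _) (Δm (uU R)) = Δg (alphaHom lam (uU R))
    rw [hm, alphaHom_uU, map_add, map_one, map_mul, AlgHom.commutes, hg,
      Algebra.TensorProduct.map_tmul, alphaHom_uU]
    exact tensor_key lam (tT R lam)
  · intro εm εg hm hg
    apply locAway_algHom_ext (Polynomial.X : Polynomial R)
    show εg (alphaHom lam (uU R)) = εm (uU R)
    rw [alphaHom_uU, hm, map_add, map_one, map_mul, hg, mul_zero, add_zero]
  · intro hlam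
    obtain ⟨u, hu⟩ := hlam
    set e : GmA R := (↑u⁻¹ : R) • (uU R - 1) with he_def
    have he : (1 : GmA R) + algebraMap R (GmA R) lam * e = uU R := by
      rw [he_def, ← Algebra.smul_def, smul_smul, ← hu, Units.mul_inv, one_smul]
      ring
    set β : GA R lam →ₐ[R] GmA R :=
      IsLocalization.liftAlgHom
        (M := Submonoid.powers (1 + Polynomial.C lam * Polynomial.X : Polynomial R))
        (f := Polynomial.aeval e)
        (by
          rintro ⟨-, n, rfl⟩
          simp only [map_pow]
          apply IsUnit.pow
          have : (Polynomial.aeval e) (1 + Polynomial.C lam * Polynomial.X) = uU R := by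
            rw [map_add, map_one, map_mul, Polynomial.aeval_C, Polynomial.aeval_X, he]
          rw [this, uU]
          exact IsLocalization.Away.algebraMap_isUnit _) with hβ_def
    have hβT : β (tT R lam) = e := by
      rw [hβ_def, tT, IsLocalization.liftAlgHom_apply, IsLocalization.lift_eq]
      simp
    have hβα : β.comp (alphaHom lam) = AlgHom.id R (GmA R) := by
      apply locAway_algHom_ext (Polynomial.X : Polynomial R)
      show β (alphaHom lam (uU R)) = uU R
      rw [alphaHom_uU, map_add, map_one, map_mul, AlgHom.commutes, hβT, he]
    have hαβ : (alphaHom lam).comp β = AlgHom.id R (GA R lam) := by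
      apply locAway_algHom_ext (1 + Polynomial.C lam * Polynomial.X : Polynomial R)
      show alphaHom lam (β (tT R lam)) = tT R lam
      rw [hβT, he_def, map_smul, map_sub, map_one, alphaHom_uU, add_sub_cancel_left,
        ← Algebra.smul_def, smul_smul, ← hu, Units.inv_mul, one_smul]
    exact Function.bijective_iff_has_inverse.mpr
      ⟨β, fun x => AlgHom.congr_fun hβα x, fun x => AlgHom.congr_fun hαβ x⟩
end
end

section
/- Let R be a commutative ring, λ ∈ R, and let H = R[X,Y,1/(1+λX)] be the (noncommutative group scheme's commutative coordinate) Hopf algebra with Δ(X) = X⊗1 + (1+λX)⊗X, Δ(Y) = Y⊗1 + (1+λX)⊗Y, ε(X)=ε(Y)=0, S(X) = −X/(1+λX), S(Y) = −Y/(1+λX). Then these structure maps are well defined and satisfy the Hopf algebra axioms: Δ is coassociative on X and Y, ε is a counit, and the antipode identity m∘(S⊗id)∘Δ = η∘ε holds on X and on Y. -/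
open scoped TensorProduct

noncomputable section

/-- The coordinate ring `H = R[X,Y, 1/(1+λX)]` of `ℋ^{(λ)}_R`. -/
abbrev HA (R : Type*) [CommRing R] (lam : R) : Type _ :=
  Localization.Away
    (1 + MvPolynomial.C lam * MvPolynomial.X 0 : MvPolynomial (Fin 2) R)

/-- The image of `X` in `H`. -/
def hX (R : Type*) [CommRing R] (lam : R) : HA R lam :=
  algebraMap (MvPolynomial (Fin 2) R) (HA R lam) (MvPolynomial.X 0)

/-- The image of `Y` in `H`. -/
def hY (R : Type*) [CommRing R] (lam : R) : HA R lam :=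
  algebraMap (MvPolynomial (Fin 2) R) (HA R lam) (MvPolynomial.X 1)

/-!
Write `u = 1 + λX`. The generators `X` and `Y` are skew primitive for the grouplike element `u`:
`Δ t = t ⊗ 1 + u ⊗ t` with `Δ u = u ⊗ u`, `ε u = 1` and `S u = u⁻¹`. For such `t`,
coassociativity, the counit axiom and the antipode axiom are identities that only involve `t` and
`u`. The maps themselves come from the universal properties of `R[X,Y]` and of its localization;
the one point to check is that `u` goes to a unit, which for `Δ` is the identity
`1 + λ (X ⊗ 1 + u ⊗ X) = u ⊗ u`.
-/

open MvPolynomial TensorProduct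

section SkewPrimitive

variable {R H : Type*} [CommRing R] [CommRing H] [Algebra R H]
  {Δ : H →ₐ[R] H ⊗[R] H} {t u : H}

theorem coassoc_of_skewPrimitive (ht : Δ t = t ⊗ₜ 1 + u ⊗ₜ t) (hu : Δ u = u ⊗ₜ u) :
    Algebra.TensorProduct.assoc R R R H H H (Algebra.TensorProduct.map Δ (AlgHom.id R H) (Δ t))
      = Algebra.TensorProduct.map (AlgHom.id R H) Δ (Δ t) := by
  simp only [ht, hu, map_add, Algebra.TensorProduct.map_tmul, AlgHom.coe_id, id_eq, map_one,
    add_tmul, tmul_add, Algebra.TensorProduct.assoc_tmul, Algebra.TensorProduct.one_def]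
  abel

theorem counit_of_skewPrimitive (ε : H →ₐ[R] R) (ht : Δ t = t ⊗ₜ 1 + u ⊗ₜ t)
    (hεt : ε t = 0) (hεu : ε u = 1) :
    Algebra.TensorProduct.lid R H (Algebra.TensorProduct.map ε (AlgHom.id R H) (Δ t)) = t := by
  simp [ht, hεt, hεu]

theorem antipode_of_skewPrimitive (S : H →ₐ[R] H) (ht : Δ t = t ⊗ₜ 1 + u ⊗ₜ t)
    (hSt : S t = -(t * S u)) :
    Algebra.TensorProduct.lmul' R (Algebra.TensorProduct.map S (AlgHom.id R H) (Δ t)) = 0 := by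
  simp only [ht, map_add, Algebra.TensorProduct.map_tmul, AlgHom.coe_id, id_eq,
    Algebra.TensorProduct.lmul'_apply_tmul, hSt, map_one, mul_one]
  ring

end SkewPrimitive

theorem one_add_mul_comul_eq_tmul {R A : Type*} [CommRing R] [CommRing A] [Algebra R A]
    (lam : R) (x : A) :
    1 + algebraMap R (A ⊗[R] A) lam * (x ⊗ₜ 1 + (1 + algebraMap R A lam * x) ⊗ₜ x)
      = (1 + algebraMap R A lam * x) ⊗ₜ (1 + algebraMap R A lam * x) := by
  simp only [← Algebra.smul_def, smul_add, smul_tmul', ← smul_tmul, Algebra.TensorProduct.one_def,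
    tmul_add, add_tmul]
  abel

theorem aeval_one_add_C_mul_X {R σ A : Type*} [CommRing R] [CommRing A] [Algebra R A]
    (lam : R) (i : σ) (v : σ → A) :
    aeval v (1 + C lam * X i) = 1 + algebraMap R A lam * v i := by
  simp

namespace HA

variable (R : Type*) [CommRing R] (lam : R)

def hU : HA R lam := 1 + algebraMap R (HA R lam) lam * hX R lam

theorem hU_eq_algebraMap :
    hU R lam = algebraMap (MvPolynomial (Fin 2) R) (HA R lam) (1 + C lam * X 0) := by
  simp [hU, hX, IsScalarTower.algebraMap_apply R (MvPolynomial (Fin 2) R) (HA R lam)]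

def hUinv : HA R lam := IsLocalization.Away.invSelf (1 + C lam * X 0 : MvPolynomial (Fin 2) R)

theorem hU_mul_hUinv : hU R lam * hUinv R lam = 1 := by
  rw [hU_eq_algebraMap]
  exact IsLocalization.Away.mul_invSelf _

theorem aeval_comul_one_add_C_mul_X :
    aeval ![hX R lam ⊗ₜ 1 + hU R lam ⊗ₜ hX R lam, hY R lam ⊗ₜ 1 + hU R lam ⊗ₜ hY R lam]
      (1 + C lam * X 0) = hU R lam ⊗ₜ[R] hU R lam :=
  (aeval_one_add_C_mul_X lam 0 _).trans (one_add_mul_comul_eq_tmul lam (hX R lam))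

def comul : HA R lam →ₐ[R] HA R lam ⊗[R] HA R lam :=
  IsLocalization.Away.liftAlgHom (1 + C lam * X 0)
    (f := aeval ![hX R lam ⊗ₜ 1 + hU R lam ⊗ₜ hX R lam, hY R lam ⊗ₜ 1 + hU R lam ⊗ₜ hY R lam])
    (by
      rw [aeval_comul_one_add_C_mul_X]
      exact .of_mul_eq_one (hUinv R lam ⊗ₜ hUinv R lam) (by
        rw [Algebra.TensorProduct.tmul_mul_tmul, hU_mul_hUinv, Algebra.TensorProduct.one_def]))

def counit : HA R lam →ₐ[R] R :=
  IsLocalization.Away.liftAlgHom (1 + C lam * X 0) (f := aeval ![0, 0]) (by simp)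

theorem aeval_antipode_one_add_C_mul_X :
    aeval ![-(hX R lam * hUinv R lam), -(hY R lam * hUinv R lam)] (1 + C lam * X 0)
      = hUinv R lam := by
  have h := hU_mul_hUinv R lam
  rw [hU] at h
  rw [aeval_one_add_C_mul_X, Matrix.cons_val_zero]
  linear_combination -h

def antipode : HA R lam →ₐ[R] HA R lam :=
  IsLocalization.Away.liftAlgHom (1 + C lam * X 0)
    (f := aeval ![-(hX R lam * hUinv R lam), -(hY R lam * hUinv R lam)])
    (by
      rw [aeval_antipode_one_add_C_mul_X]
      exact .of_mul_eq_one _ ((mul_comm _ _).trans (hU_mul_hUinv R lam)))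

variable {R lam}

@[simp]
theorem comul_hX : comul R lam (hX R lam) = hX R lam ⊗ₜ 1 + hU R lam ⊗ₜ hX R lam := by
  simp [comul, hX]

@[simp]
theorem comul_hY : comul R lam (hY R lam) = hY R lam ⊗ₜ 1 + hU R lam ⊗ₜ hY R lam := by
  simp [comul, hY]

@[simp]
theorem comul_hU : comul R lam (hU R lam) = hU R lam ⊗ₜ hU R lam := by
  conv_lhs => rw [hU_eq_algebraMap]
  simp only [comul, IsLocalization.Away.coe_liftAlgHom, IsLocalization.Away.lift_eq]
  exact aeval_comul_one_add_C_mul_X R lam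

@[simp]
theorem counit_hX : counit R lam (hX R lam) = 0 := by
  simp [counit, hX]

@[simp]
theorem counit_hY : counit R lam (hY R lam) = 0 := by
  simp [counit, hY]

@[simp]
theorem counit_hU : counit R lam (hU R lam) = 1 := by
  simp [hU_eq_algebraMap, counit]

@[simp]
theorem antipode_hX : antipode R lam (hX R lam) = -(hX R lam * hUinv R lam) := by
  simp [antipode, hX]

@[simp]
theorem antipode_hY : antipode R lam (hY R lam) = -(hY R lam * hUinv R lam) := by
  simp [antipode, hY]

@[simp]
theorem antipode_hU : antipode R lam (hU R lam) = hUinv R lam := by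
  conv_lhs => rw [hU_eq_algebraMap]
  simp only [antipode, IsLocalization.Away.coe_liftAlgHom, IsLocalization.Away.lift_eq]
  exact aeval_antipode_one_add_C_mul_X R lam

theorem comul_of_mem {t : HA R lam} (ht : t ∈ ({hX R lam, hY R lam} : Set (HA R lam))) :
    comul R lam t = t ⊗ₜ 1 + hU R lam ⊗ₜ t := by
  rcases ht with rfl | rfl <;> simp

theorem counit_of_mem {t : HA R lam} (ht : t ∈ ({hX R lam, hY R lam} : Set (HA R lam))) :
    counit R lam t = 0 := by
  rcases ht with rfl | rfl <;> simp

theorem antipode_of_mem {t : HA R lam} (ht : t ∈ ({hX R lam, hY R lam} : Set (HA R lam))) :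
    antipode R lam t = -(t * antipode R lam (hU R lam)) := by
  rcases ht with rfl | rfl <;> simp

theorem hU_mul_antipode_of_mem {t : HA R lam}
    (ht : t ∈ ({hX R lam, hY R lam} : Set (HA R lam))) :
    hU R lam * antipode R lam t = -t := by
  rw [antipode_of_mem ht, antipode_hU, mul_neg, mul_left_comm, hU_mul_hUinv, mul_one]

end HA

/-- the structure maps `Δ(X)=X⊗1+(1+λX)⊗X`, `Δ(Y)=Y⊗1+(1+λX)⊗Y`,
`ε(X)=ε(Y)=0`, `S(X)=-X/(1+λX)`, `S(Y)=-Y/(1+λX)` are well defined on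
`H = R[X,Y,1/(1+λX)]` and satisfy the Hopf algebra axioms on `X` and on `Y`. -/
theorem stmt3 (R : Type*) [CommRing R] (lam : R) :
    ∃ (Δ : HA R lam →ₐ[R] HA R lam ⊗[R] HA R lam) (ε : HA R lam →ₐ[R] R)
      (S : HA R lam →ₐ[R] HA R lam),
      -- values on the generators
      Δ (hX R lam) = hX R lam ⊗ₜ 1 +
        (1 + algebraMap R (HA R lam) lam * hX R lam) ⊗ₜ hX R lam ∧
      Δ (hY R lam) = hY R lam ⊗ₜ 1 +
        (1 + algebraMap R (HA R lam) lam * hX R lam) ⊗ₜ hY R lam ∧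
      ε (hX R lam) = 0 ∧ ε (hY R lam) = 0 ∧
      (1 + algebraMap R (HA R lam) lam * hX R lam) * S (hX R lam) = - hX R lam ∧
      (1 + algebraMap R (HA R lam) lam * hX R lam) * S (hY R lam) = - hY R lam ∧
      -- coassociativity on X and Y
      (∀ t ∈ ({hX R lam, hY R lam} : Set (HA R lam)),
        (Algebra.TensorProduct.assoc R R R (HA R lam) (HA R lam) (HA R lam))
            ((Algebra.TensorProduct.map Δ (AlgHom.id R _)) (Δ t))
          = (Algebra.TensorProduct.map (AlgHom.id R _) Δ) (Δ t)) ∧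
      -- counit axiom on X and Y
      (∀ t ∈ ({hX R lam, hY R lam} : Set (HA R lam)),
        (Algebra.TensorProduct.lid R (HA R lam))
            ((Algebra.TensorProduct.map ε (AlgHom.id R _)) (Δ t)) = t) ∧
      -- antipode axiom `m ∘ (S ⊗ id) ∘ Δ = η ∘ ε` on X and Y
      (∀ t ∈ ({hX R lam, hY R lam} : Set (HA R lam)),
        (Algebra.TensorProduct.lmul' R)
            ((Algebra.TensorProduct.map S (AlgHom.id R _)) (Δ t))
          = algebraMap R (HA R lam) (ε t)) := by
  refine ⟨HA.comul R lam, HA.counit R lam, HA.antipode R lam, HA.comul_hX, HA.comul_hY,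
    HA.counit_hX, HA.counit_hY,
    HA.hU_mul_antipode_of_mem (.inl rfl), HA.hU_mul_antipode_of_mem (.inr rfl),
    fun t ht => coassoc_of_skewPrimitive (HA.comul_of_mem ht) HA.comul_hU,
    fun t ht => counit_of_skewPrimitive _ (HA.comul_of_mem ht) (HA.counit_of_mem ht) HA.counit_hU,
    fun t ht => ?_⟩
  rw [HA.counit_of_mem ht, map_zero]
  exact antipode_of_skewPrimitive _ (HA.comul_of_mem ht) (HA.antipode_of_mem ht)
end
end

section
/- Let p be a prime, R an F_p-algebra, λ ∈ R. The ideal (X^p, Y^p) of the Hopf algebra H = R[X,Y,1/(1+λX)] (with Δ(X)=X⊗1+(1+λX)⊗X, Δ(Y)=Y⊗1+(1+λX)⊗Y, ε(X)=ε(Y)=0) is a Hopf ideal: Δ(X^p) and Δ(Y^p) lie in (X^p,Y^p)⊗H + H⊗(X^p,Y^p), ε(X^p)=ε(Y^p)=0, and S(X^p), S(Y^p) ∈ (X^p, Y^p). Hence the quotient A^{(λ)}_R = R[X,Y]/(X^p,Y^p) inherits a Hopf algebra structure with Δ(X)=X⊗1+(1+λX)⊗X and Δ(Y)=Y⊗1+(1+λX)⊗Y.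 -/
open scoped TensorProduct

noncomputable section

/-- The quotient Hopf algebra `A^{(λ)}_R = R[X,Y]/(X^p, Y^p)`. -/
abbrev Aq (p : ℕ) (R : Type*) [CommRing R] : Type _ :=
  MvPolynomial (Fin 2) R ⧸
    Ideal.span ({MvPolynomial.X 0 ^ p, MvPolynomial.X 1 ^ p} :
      Set (MvPolynomial (Fin 2) R))

/-- The class of `X` in `A^{(λ)}_R`. -/
def aX (p : ℕ) (R : Type*) [CommRing R] : Aq p R :=
  Ideal.Quotient.mk _ (MvPolynomial.X 0)

/-- The class of `Y` in `A^{(λ)}_R`. -/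
def aY (p : ℕ) (R : Type*) [CommRing R] : Aq p R :=
  Ideal.Quotient.mk _ (MvPolynomial.X 1)

/-
Everything rests on the Frobenius identity `(x + y)^p = x^p + y^p`, valid in every commutative
algebra over an `𝔽_p`-algebra, in particular in `H ⊗ H` and in `A ⊗ A`. It gives
`Δ(X^p) = X^p ⊗ 1 + (1+λX)^p ⊗ X^p` and likewise for `Y`, so `Δ` maps `(X^p, Y^p)` into
`(X^p, Y^p) ⊗ H + H ⊗ (X^p, Y^p)`, and the same formulas kill `X^p` and `Y^p` in `A ⊗ A`, so
the comultiplication descends to `A`. For the antipode, `(1+λX)^p S(X)^p = (-X)^p` with `1+λX`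
a unit.
-/

lemma add_pow_prime_of_charP_algebra {p : ℕ} (R : Type*) [CommRing R] [CharP R p] {A : Type*}
    [CommSemiring A] [Algebra R A] (hp : p.Prime) (x y : A) :
    (x + y) ^ p = x ^ p + y ^ p := by
  have hpA : (p : A) = 0 := by
    rw [← map_natCast (algebraMap R A), CharP.cast_eq_zero, map_zero]
  obtain ⟨r, hr⟩ := exists_add_pow_prime_eq hp x y
  simp [hr, hpA]

lemma tmul_add_tmul_pow_prime {p : ℕ} {R : Type*} [CommRing R] [CharP R p] {A B : Type*}
    [CommSemiring A] [Algebra R A] [CommSemiring B] [Algebra R B] (hp : p.Prime)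
    (a c : A) (b d : B) :
    (a ⊗ₜ[R] b + c ⊗ₜ[R] d) ^ p = (a ^ p) ⊗ₜ (b ^ p) + (c ^ p) ⊗ₜ (d ^ p) := by
  rw [add_pow_prime_of_charP_algebra R hp, Algebra.TensorProduct.tmul_pow,
    Algebra.TensorProduct.tmul_pow]

open Algebra.TensorProduct in
lemma comul_pow_mem_of_comul_eq {p : ℕ} {R A : Type*} [CommRing R] [CharP R p] [CommRing A]
    [Algebra R A] (hp : p.Prime) (Δ : A →ₐ[R] A ⊗[R] A) {a u : A}
    (hΔ : Δ a = a ⊗ₜ 1 + u ⊗ₜ a) {I : Ideal A} (ha : a ^ p ∈ I) :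
    Δ (a ^ p) ∈ I.map (includeLeft : A →ₐ[R] A ⊗[R] A) ⊔ I.map includeRight := by
  rw [map_pow, hΔ, tmul_add_tmul_pow_prime hp, one_pow]
  have hright : (u ^ p) ⊗ₜ[R] (a ^ p) = (u ^ p) ⊗ₜ[R] 1 * includeRight (a ^ p) := by simp
  rw [hright]
  exact add_mem (Ideal.mem_sup_left (Ideal.mem_map_of_mem _ ha))
    (Ideal.mem_sup_right (Ideal.mul_mem_left _ _ (Ideal.mem_map_of_mem _ ha)))

lemma pow_mem_of_isUnit_mul_eq_neg {A : Type*} [CommRing A] {I : Ideal A} {u s a : A}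
    (hu : IsUnit u) (h : u * s = -a) {n : ℕ} (ha : a ^ n ∈ I) : s ^ n ∈ I := by
  rw [← Ideal.unit_mul_mem_iff_mem I (hu.pow n), ← mul_pow, h, neg_pow]
  exact I.mul_mem_left _ ha

lemma isUnit_one_add_mul_hX (R : Type*) [CommRing R] (lam : R) :
    IsUnit (1 + algebraMap R (HA R lam) lam * hX R lam) := by
  have h : 1 + algebraMap R (HA R lam) lam * hX R lam = algebraMap (MvPolynomial (Fin 2) R)
      (HA R lam) (1 + MvPolynomial.C lam * MvPolynomial.X 0) := by
    simp [hX, IsScalarTower.algebraMap_apply R (MvPolynomial (Fin 2) R) (HA R lam)]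
  rw [h]
  exact IsLocalization.Away.algebraMap_isUnit _

namespace Aq

variable {p : ℕ} {R : Type*} [CommRing R]

lemma aX_pow_eq_zero : aX p R ^ p = 0 := by
  rw [aX, ← map_pow, Ideal.Quotient.eq_zero_iff_mem]
  exact Ideal.subset_span (Set.mem_insert _ _)

lemma aY_pow_eq_zero : aY p R ^ p = 0 := by
  rw [aY, ← map_pow, Ideal.Quotient.eq_zero_iff_mem]
  exact Ideal.subset_span (Set.mem_insert_of_mem _ rfl)

variable {B : Type*} [CommRing B] [Algebra R B]

def lift (x y : B) (hx : x ^ p = 0) (hy : y ^ p = 0) : Aq p R →ₐ[R] B :=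
  Ideal.Quotient.liftₐ _ (MvPolynomial.aeval ![x, y]) fun _ hf =>
    RingHom.mem_ker.mp <| (Ideal.span_le (I := RingHom.ker (MvPolynomial.aeval ![x, y]))).mpr
      (by rintro _ (rfl | rfl) <;> simp [hx, hy]) hf

variable {x y : B} {hx : x ^ p = 0} {hy : y ^ p = 0}

@[simp] lemma lift_aX : lift x y hx hy (aX p R) = x :=
  MvPolynomial.aeval_X ![x, y] 0

@[simp] lemma lift_aY : lift x y hx hy (aY p R) = y :=
  MvPolynomial.aeval_X ![x, y] 1

def comul [CharP R p] (hp : p.Prime) (lam : R) : Aq p R →ₐ[R] Aq p R ⊗[R] Aq p R :=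
  lift (B := Aq p R ⊗[R] Aq p R)
    (aX p R ⊗ₜ 1 + (1 + algebraMap R (Aq p R) lam * aX p R) ⊗ₜ aX p R)
    (aY p R ⊗ₜ 1 + (1 + algebraMap R (Aq p R) lam * aX p R) ⊗ₜ aY p R)
    (by rw [tmul_add_tmul_pow_prime hp, aX_pow_eq_zero]; simp)
    (by rw [tmul_add_tmul_pow_prime hp, aY_pow_eq_zero]; simp)

end Aq

/-- the ideal `(X^p, Y^p)` of `H = R[X,Y,1/(1+λX)]` is a Hopf ideal,
and the quotient `A^{(λ)}_R = R[X,Y]/(X^p,Y^p)` inherits a Hopf algebra structure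
with `Δ(X)=X⊗1+(1+λX)⊗X`, `Δ(Y)=Y⊗1+(1+λX)⊗Y`. -/
theorem stmt5 (p : ℕ) (hp : p.Prime) (R : Type*) [CommRing R] [CharP R p] (lam : R) :
    (∀ (Δ : HA R lam →ₐ[R] HA R lam ⊗[R] HA R lam) (ε : HA R lam →ₐ[R] R)
       (S : HA R lam →ₐ[R] HA R lam),
      Δ (hX R lam) = hX R lam ⊗ₜ 1 +
          (1 + algebraMap R (HA R lam) lam * hX R lam) ⊗ₜ hX R lam →
      Δ (hY R lam) = hY R lam ⊗ₜ 1 +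
          (1 + algebraMap R (HA R lam) lam * hX R lam) ⊗ₜ hY R lam →
      ε (hX R lam) = 0 → ε (hY R lam) = 0 →
      (1 + algebraMap R (HA R lam) lam * hX R lam) * S (hX R lam) = - hX R lam →
      (1 + algebraMap R (HA R lam) lam * hX R lam) * S (hY R lam) = - hY R lam →
      -- the ideal I = (X^p, Y^p)
      ∀ I : Ideal (HA R lam), I = Ideal.span {hX R lam ^ p, hY R lam ^ p} →
        (Δ (hX R lam ^ p) ∈
            Ideal.map (Algebra.TensorProduct.includeLeft :
              HA R lam →ₐ[R] HA R lam ⊗[R] HA R lam) I ⊔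
            Ideal.map (Algebra.TensorProduct.includeRight :
              HA R lam →ₐ[R] HA R lam ⊗[R] HA R lam) I) ∧
        (Δ (hY R lam ^ p) ∈
            Ideal.map (Algebra.TensorProduct.includeLeft :
              HA R lam →ₐ[R] HA R lam ⊗[R] HA R lam) I ⊔
            Ideal.map (Algebra.TensorProduct.includeRight :
              HA R lam →ₐ[R] HA R lam ⊗[R] HA R lam) I) ∧
        ε (hX R lam ^ p) = 0 ∧ ε (hY R lam ^ p) = 0 ∧
        S (hX R lam ^ p) ∈ I ∧ S (hY R lam ^ p) ∈ I) ∧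
    -- the quotient inherits the Hopf structure
    (∃ ΔA : Aq p R →ₐ[R] Aq p R ⊗[R] Aq p R,
      ΔA (aX p R) = aX p R ⊗ₜ 1 +
          (1 + algebraMap R (Aq p R) lam * aX p R) ⊗ₜ aX p R ∧
      ΔA (aY p R) = aY p R ⊗ₜ 1 +
          (1 + algebraMap R (Aq p R) lam * aX p R) ⊗ₜ aY p R) := by
  refine ⟨fun Δ ε S hΔX hΔY hεX hεY hSX hSY I hI => ?_,
    Aq.comul hp lam, Aq.lift_aX, Aq.lift_aY⟩
  subst hI
  have hXI : hX R lam ^ p ∈ Ideal.span {hX R lam ^ p, hY R lam ^ p} :=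
    Ideal.subset_span (Set.mem_insert _ _)
  have hYI : hY R lam ^ p ∈ Ideal.span {hX R lam ^ p, hY R lam ^ p} :=
    Ideal.subset_span (Set.mem_insert_of_mem _ rfl)
  have hu := isUnit_one_add_mul_hX R lam
  refine ⟨comul_pow_mem_of_comul_eq hp Δ hΔX hXI, comul_pow_mem_of_comul_eq hp Δ hΔY hYI,
    ?_, ?_, ?_, ?_⟩
  · rw [map_pow, hεX, zero_pow hp.ne_zero]
  · rw [map_pow, hεY, zero_pow hp.ne_zero]
  · rw [map_pow]
    exact pow_mem_of_isUnit_mul_eq_neg hu hSX hXI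
  · rw [map_pow]
    exact pow_mem_of_isUnit_mul_eq_neg hu hSY hYI
end
end

section
/- Let p be a prime and R a commutative F_p-algebra with λ ∈ R. Let ℋ = Spec R[X,Y,1/(1+λX)] with the group structure of Definition 2.3. The maps i: G_a → ℋ (on coordinate rings: X ↦ 0, Y ↦ T) and π: ℋ → 𝒢^{(λ)} (on coordinate rings: T ↦ X) are homomorphisms of group schemes, i.e. the corresponding algebra maps i^#: R[X,Y,1/(1+λX)] → R[T] and π^#: R[T,1/(1+λT)] → R[X,Y,1/(1+λX)] are Hopf algebra homomorphisms. Moreover π^# is injective, i^# is surjective, and the kernel of i^# is the Hopf ideal generated by X, exhibiting a short exact sequence 0 → G_a → ℋ^{(λ)} → 𝒢^{(λ)} → 0. -/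
open scoped TensorProduct

noncomputable section

section Aux

variable {R : Type*} [CommRing R] (lam : R)

/-! ### ext lemmas -/

lemma HA_ext {S : Type*} [CommRing S] [Algebra R S] {F G : HA R lam →ₐ[R] S}
    (h0 : F (hX R lam) = G (hX R lam)) (h1 : F (hY R lam) = G (hY R lam)) : F = G := by
  apply AlgHom.coe_ringHom_injective
  apply IsLocalization.ringHom_ext
    (Submonoid.powers (1 + MvPolynomial.C lam * MvPolynomial.X 0 : MvPolynomial (Fin 2) R))
  have : F.comp (IsScalarTower.toAlgHom R (MvPolynomial (Fin 2) R) (HA R lam)) =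
      G.comp (IsScalarTower.toAlgHom R (MvPolynomial (Fin 2) R) (HA R lam)) := by
    apply MvPolynomial.algHom_ext
    intro i
    fin_cases i
    · simpa [hX] using h0
    · simpa [hY] using h1
  exact congrArg AlgHom.toRingHom this

lemma GA_ext {S : Type*} [CommRing S] [Algebra R S] {F G : GA R lam →ₐ[R] S}
    (h0 : F (tT R lam) = G (tT R lam)) : F = G := by
  apply AlgHom.coe_ringHom_injective
  apply IsLocalization.ringHom_ext
    (Submonoid.powers (1 + Polynomial.C lam * Polynomial.X : Polynomial R))
  have : F.comp (IsScalarTower.toAlgHom R (Polynomial R) (GA R lam)) =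
      G.comp (IsScalarTower.toAlgHom R (Polynomial R) (GA R lam)) := by
    apply Polynomial.algHom_ext
    simpa [tT] using h0
  exact congrArg AlgHom.toRingHom this

/-! ### the map i^# -/

def auxφ (R : Type*) [CommRing R] : MvPolynomial (Fin 2) R →ₐ[R] Polynomial R :=
  MvPolynomial.aeval ![0, Polynomial.X]

lemma auxφ_unit (R : Type*) [CommRing R] (lam : R) :
    ∀ y : Submonoid.powers (1 + MvPolynomial.C lam * MvPolynomial.X 0 : MvPolynomial (Fin 2) R),
      IsUnit (auxφ R y) := by
  rintro ⟨y, n, rfl⟩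
  simp only [map_pow]
  exact (by simp [auxφ] : auxφ R (1 + MvPolynomial.C lam * MvPolynomial.X 0) = 1) ▸
    isUnit_one.pow n

def auxiH (R : Type*) [CommRing R] (lam : R) : HA R lam →ₐ[R] Polynomial R :=
  IsLocalization.liftAlgHom (S := HA R lam) (auxφ_unit R lam)

lemma auxiH_algebraMap (q : MvPolynomial (Fin 2) R) :
    auxiH R lam (algebraMap _ _ q) = auxφ R q := by
  simp [auxiH, IsLocalization.liftAlgHom_apply, IsLocalization.lift_eq]

@[simp] lemma auxiH_hX : auxiH R lam (hX R lam) = 0 := by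
  simp [hX, auxiH_algebraMap, auxφ]

@[simp] lemma auxiH_hY : auxiH R lam (hY R lam) = Polynomial.X := by
  simp [hY, auxiH_algebraMap, auxφ]

/-! ### the map π^# -/

lemma hX_unit : IsUnit (1 + algebraMap R (HA R lam) lam * hX R lam) := by
  have : (1 + algebraMap R (HA R lam) lam * hX R lam) =
      algebraMap (MvPolynomial (Fin 2) R) (HA R lam)
        (1 + MvPolynomial.C lam * MvPolynomial.X 0) := by
    simp [hX, IsScalarTower.algebraMap_apply R (MvPolynomial (Fin 2) R) (HA R lam),
      MvPolynomial.algebraMap_eq]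
  rw [this]
  exact IsLocalization.Away.algebraMap_isUnit _

def auxψ (R : Type*) [CommRing R] (lam : R) : Polynomial R →ₐ[R] HA R lam :=
  Polynomial.aeval (hX R lam)

lemma auxψ_unit :
    ∀ y : Submonoid.powers (1 + Polynomial.C lam * Polynomial.X : Polynomial R),
      IsUnit (auxψ R lam y) := by
  rintro ⟨y, n, rfl⟩
  simp only [map_pow]
  refine IsUnit.pow n ?_
  have : auxψ R lam (1 + Polynomial.C lam * Polynomial.X) =
      1 + algebraMap R (HA R lam) lam * hX R lam := by
    simp [auxψ, Polynomial.aeval_C, Algebra.smul_def]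
  rw [this]
  exact hX_unit lam

def auxπH (R : Type*) [CommRing R] (lam : R) : GA R lam →ₐ[R] HA R lam :=
  IsLocalization.liftAlgHom (S := GA R lam) (auxψ_unit lam)

lemma auxπH_algebraMap (q : Polynomial R) :
    auxπH R lam (algebraMap _ _ q) = auxψ R lam q := by
  simp [auxπH, IsLocalization.liftAlgHom_apply, IsLocalization.lift_eq]

@[simp] lemma auxπH_tT : auxπH R lam (tT R lam) = hX R lam := by
  simp [tT, auxπH_algebraMap, auxψ]

/-! ### the retraction σ -/

lemma tT_unit : IsUnit (1 + algebraMap R (GA R lam) lam * tT R lam) := by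
  have : (1 + algebraMap R (GA R lam) lam * tT R lam) =
      algebraMap (Polynomial R) (GA R lam) (1 + Polynomial.C lam * Polynomial.X) := by
    simp [tT, IsScalarTower.algebraMap_apply R (Polynomial R) (GA R lam),
      Polynomial.algebraMap_eq]
  rw [this]
  exact IsLocalization.Away.algebraMap_isUnit _

def auxχ (R : Type*) [CommRing R] (lam : R) : MvPolynomial (Fin 2) R →ₐ[R] GA R lam :=
  MvPolynomial.aeval ![tT R lam, 0]

lemma auxχ_unit :
    ∀ y : Submonoid.powers (1 + MvPolynomial.C lam * MvPolynomial.X 0 : MvPolynomial (Fin 2) R),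
      IsUnit (auxχ R lam y) := by
  rintro ⟨y, n, rfl⟩
  simp only [map_pow]
  refine IsUnit.pow n ?_
  have : auxχ R lam (1 + MvPolynomial.C lam * MvPolynomial.X 0) =
      1 + algebraMap R (GA R lam) lam * tT R lam := by
    simp [auxχ, Algebra.smul_def]
  rw [this]
  exact tT_unit lam

def auxσ (R : Type*) [CommRing R] (lam : R) : HA R lam →ₐ[R] GA R lam :=
  IsLocalization.liftAlgHom (S := HA R lam) (auxχ_unit lam)

lemma auxσ_algebraMap (q : MvPolynomial (Fin 2) R) :
    auxσ R lam (algebraMap _ _ q) = auxχ R lam q := by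
  simp [auxσ, IsLocalization.liftAlgHom_apply, IsLocalization.lift_eq]

@[simp] lemma auxσ_hX : auxσ R lam (hX R lam) = tT R lam := by
  simp [hX, auxσ_algebraMap, auxχ]

/-! ### kernel computation -/

lemma X0_dvd_sub (q : MvPolynomial (Fin 2) R) :
    (MvPolynomial.X 0 : MvPolynomial (Fin 2) R) ∣
      q - MvPolynomial.aeval ![0, MvPolynomial.X 1] q := by
  induction q using MvPolynomial.induction_on with
  | C a => simp
  | add p q hp hq =>
      have : p + q - MvPolynomial.aeval ![0, MvPolynomial.X 1] (p + q) =
          (p - MvPolynomial.aeval ![0, MvPolynomial.X 1] p) +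
          (q - MvPolynomial.aeval ![0, MvPolynomial.X 1] q) := by
        rw [map_add]; ring
      rw [this]; exact dvd_add hp hq
  | mul_X p i hp =>
      fin_cases i
      · show (MvPolynomial.X 0 : MvPolynomial (Fin 2) R) ∣
            p * MvPolynomial.X 0 -
              MvPolynomial.aeval ![0, MvPolynomial.X 1] (p * MvPolynomial.X 0)
        have : p * MvPolynomial.X 0 -
            MvPolynomial.aeval ![0, MvPolynomial.X 1] (p * MvPolynomial.X 0) =
            p * MvPolynomial.X 0 := by simp
        rw [this]; exact dvd_mul_left _ _
      · show (MvPolynomial.X 0 : MvPolynomial (Fin 2) R) ∣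
            p * MvPolynomial.X 1 -
              MvPolynomial.aeval ![0, MvPolynomial.X 1] (p * MvPolynomial.X 1)
        have : p * MvPolynomial.X 1 -
            MvPolynomial.aeval ![0, MvPolynomial.X 1] (p * MvPolynomial.X 1) =
            (p - MvPolynomial.aeval ![0, MvPolynomial.X 1] p) * MvPolynomial.X 1 := by
          rw [map_mul]; simp; ring
        rw [this]; exact dvd_mul_of_dvd_left hp _

lemma X0_dvd_of_auxφ_eq_zero (q : MvPolynomial (Fin 2) R) (h : auxφ R q = 0) :
    (MvPolynomial.X 0 : MvPolynomial (Fin 2) R) ∣ q := by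
  have hj : (MvPolynomial.aeval ![0, MvPolynomial.X 1] :
      MvPolynomial (Fin 2) R →ₐ[R] MvPolynomial (Fin 2) R) =
      (Polynomial.aeval (MvPolynomial.X 1 : MvPolynomial (Fin 2) R)).comp (auxφ R) := by
    apply MvPolynomial.algHom_ext
    intro i; fin_cases i <;> simp [auxφ]
  have hd := X0_dvd_sub q
  rw [hj] at hd
  simpa [h] using hd

lemma ker_auxiH : RingHom.ker (auxiH R lam) = Ideal.span {hX R lam} := by
  apply le_antisymm
  · intro a ha
    rw [RingHom.mem_ker] at ha
    obtain ⟨⟨q, s⟩, hqs⟩ := IsLocalization.surj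
      (Submonoid.powers (1 + MvPolynomial.C lam * MvPolynomial.X 0 : MvPolynomial (Fin 2) R)) a
    have hq0 : auxφ R q = 0 := by
      have h2 := congrArg (auxiH R lam) hqs
      rw [map_mul, ha, zero_mul, auxiH_algebraMap] at h2
      exact h2.symm
    obtain ⟨r, rfl⟩ := X0_dvd_of_auxφ_eq_zero q hq0
    rw [Ideal.mem_span_singleton]
    obtain ⟨u, hu⟩ := IsLocalization.map_units (HA R lam) s
    refine ⟨algebraMap _ _ r * ↑u⁻¹, ?_⟩
    have h3 : a * ↑u = hX R lam * algebraMap _ _ r := by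
      rw [hu]; rw [hqs, map_mul]; rfl
    calc a = a * ↑u * ↑u⁻¹ := by rw [mul_assoc, Units.mul_inv, mul_one]
    _ = hX R lam * (algebraMap _ _ r * ↑u⁻¹) := by rw [h3, mul_assoc]
  · rw [Ideal.span_le, Set.singleton_subset_iff]
    simpa [RingHom.mem_ker] using auxiH_hX lam

lemma auxiH_surj : Function.Surjective (auxiH R lam) := by
  intro x
  have h : ⊤ ≤ (auxiH R lam).range := by
    rw [← Polynomial.adjoin_X (R := R)]
    apply Algebra.adjoin_le
    intro y hy
    rw [Set.mem_singleton_iff] at hy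
    subst hy
    exact ⟨hY R lam, auxiH_hY lam⟩
  exact h (by trivial : x ∈ (⊤ : Subalgebra R (Polynomial R)))

lemma auxπH_inj : Function.Injective (auxπH R lam) := by
  have h : (auxσ R lam).comp (auxπH R lam) = AlgHom.id R (GA R lam) :=
    GA_ext lam (by simp)
  intro a b hab
  have ha := AlgHom.congr_fun h a
  have hb := AlgHom.congr_fun h b
  simp only [AlgHom.coe_comp, Function.comp_apply, AlgHom.coe_id, id_eq] at ha hb
  rw [← ha, ← hb, hab]

lemma auxiH_unit_elt : auxiH R lam (1 + algebraMap R (HA R lam) lam * hX R lam) = 1 := by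
  simp

lemma auxπH_unit_elt :
    auxπH R lam (1 + algebraMap R (GA R lam) lam * tT R lam) =
      1 + algebraMap R (HA R lam) lam * hX R lam := by
  simp


end Aux

set_option maxHeartbeats 1000000 in
/-- `i^# : R[X,Y,1/(1+λX)] → R[T]`, `X ↦ 0, Y ↦ T`, and
`π^# : R[T,1/(1+λT)] → R[X,Y,1/(1+λX)]`, `T ↦ X`, are Hopf algebra homomorphisms;
`π^#` is injective, `i^#` is surjective, and `ker i^# = (X)`, exhibiting a short
exact sequence `0 → G_a → ℋ^{(λ)} → 𝒢^{(λ)} → 0`. -/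
theorem stmt18 (p : ℕ) (hp : p.Prime) (R : Type*) [CommRing R] [CharP R p] (lam : R)
    -- the Hopf structure of `ℋ^{(λ)}`, pinned on the generators
    (ΔH : HA R lam →ₐ[R] HA R lam ⊗[R] HA R lam) (εH : HA R lam →ₐ[R] R)
    (SH : HA R lam →ₐ[R] HA R lam)
    (hΔX : ΔH (hX R lam) = hX R lam ⊗ₜ 1 +
      (1 + algebraMap R (HA R lam) lam * hX R lam) ⊗ₜ hX R lam)
    (hΔY : ΔH (hY R lam) = hY R lam ⊗ₜ 1 +
      (1 + algebraMap R (HA R lam) lam * hX R lam) ⊗ₜ hY R lam)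
    (hεX : εH (hX R lam) = 0) (hεY : εH (hY R lam) = 0)
    (hSX : (1 + algebraMap R (HA R lam) lam * hX R lam) * SH (hX R lam) = - hX R lam)
    (hSY : (1 + algebraMap R (HA R lam) lam * hX R lam) * SH (hY R lam) = - hY R lam)
    -- the additive Hopf structure of `R[T]`, pinned on the generator
    (ΔT : Polynomial R →ₐ[R] Polynomial R ⊗[R] Polynomial R)
    (εT : Polynomial R →ₐ[R] R) (ST : Polynomial R →ₐ[R] Polynomial R)
    (hΔT : ΔT Polynomial.X = Polynomial.X ⊗ₜ 1 + 1 ⊗ₜ Polynomial.X)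
    (hεT : εT Polynomial.X = 0) (hST : ST Polynomial.X = - Polynomial.X)
    -- the Hopf structure of `𝒢^{(λ)}`, pinned on the generator
    (Δg : GA R lam →ₐ[R] GA R lam ⊗[R] GA R lam) (εg : GA R lam →ₐ[R] R)
    (Sg : GA R lam →ₐ[R] GA R lam)
    (hΔg : Δg (tT R lam) = tT R lam ⊗ₜ 1 + 1 ⊗ₜ tT R lam + lam • (tT R lam ⊗ₜ tT R lam))
    (hεg : εg (tT R lam) = 0)
    (hSg : (1 + algebraMap R (GA R lam) lam * tT R lam) * Sg (tT R lam) = - tT R lam) :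
    ∃ (iH : HA R lam →ₐ[R] Polynomial R) (πH : GA R lam →ₐ[R] HA R lam),
      iH (hX R lam) = 0 ∧ iH (hY R lam) = Polynomial.X ∧
      πH (tT R lam) = hX R lam ∧
      -- `i^#` is a Hopf algebra homomorphism
      (Algebra.TensorProduct.map iH iH).comp ΔH = ΔT.comp iH ∧
      εT.comp iH = εH ∧
      iH.comp SH = ST.comp iH ∧
      -- `π^#` is a Hopf algebra homomorphism
      (Algebra.TensorProduct.map πH πH).comp Δg = ΔH.comp πH ∧
      εH.comp πH = εg ∧
      πH.comp Sg = SH.comp πH ∧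
      -- exactness
      Function.Injective πH ∧
      Function.Surjective iH ∧
      RingHom.ker iH = Ideal.span ({hX R lam} : Set (HA R lam)) := by
  refine ⟨auxiH R lam, auxπH R lam, auxiH_hX lam, auxiH_hY lam, auxπH_tT lam,
    ?_, ?_, ?_, ?_, ?_, ?_, auxπH_inj lam, auxiH_surj lam, ker_auxiH lam⟩
  · -- Δ compat for iH
    apply HA_ext
    · rw [AlgHom.comp_apply, AlgHom.comp_apply, hΔX, map_add,
        Algebra.TensorProduct.map_tmul, Algebra.TensorProduct.map_tmul,
        auxiH_hX]
      simp
    · rw [AlgHom.comp_apply, AlgHom.comp_apply, hΔY, map_add,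
        Algebra.TensorProduct.map_tmul, Algebra.TensorProduct.map_tmul,
        auxiH_hY, auxiH_unit_elt, map_one, hΔT]
  · -- counit compat for iH
    apply HA_ext
    · rw [AlgHom.comp_apply, auxiH_hX, map_zero, hεX]
    · rw [AlgHom.comp_apply, auxiH_hY, hεT, hεY]
  · -- antipode compat for iH
    have hx : auxiH R lam (SH (hX R lam)) = 0 := by
      have h1 := congrArg (auxiH R lam) hSX
      rw [map_mul, auxiH_unit_elt, one_mul, map_neg, auxiH_hX, neg_zero] at h1
      exact h1
    have hy : auxiH R lam (SH (hY R lam)) = - Polynomial.X := by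
      have h1 := congrArg (auxiH R lam) hSY
      rw [map_mul, auxiH_unit_elt, one_mul, map_neg, auxiH_hY] at h1
      exact h1
    apply HA_ext
    · rw [AlgHom.comp_apply, AlgHom.comp_apply, hx, auxiH_hX, map_zero]
    · rw [AlgHom.comp_apply, AlgHom.comp_apply, hy, auxiH_hY, hST]
  · -- Δ compat for πH
    refine GA_ext (S := HA R lam ⊗[R] HA R lam) lam (F := (Algebra.TensorProduct.map (auxπH R lam) (auxπH R lam)).comp Δg)
      (G := ΔH.comp (auxπH R lam)) ?_
    rw [AlgHom.comp_apply, AlgHom.comp_apply, hΔg, map_add, map_add, map_smul,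
      Algebra.TensorProduct.map_tmul, Algebra.TensorProduct.map_tmul,
      Algebra.TensorProduct.map_tmul, auxπH_tT, hΔX,
      TensorProduct.add_tmul, TensorProduct.smul_tmul', Algebra.smul_def]
    simp [add_assoc]
  · -- counit compat for πH
    apply GA_ext
    rw [AlgHom.comp_apply, auxπH_tT, hεX, hεg]
  · -- antipode compat for πH
    apply GA_ext
    rw [AlgHom.comp_apply, AlgHom.comp_apply, auxπH_tT]
    have h1 := congrArg (auxπH R lam) hSg
    rw [map_mul, auxπH_unit_elt, map_neg, auxπH_tT] at h1
    rw [← hSX] at h1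
    exact (hX_unit lam).mul_left_cancel h1
end
end
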